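/- Parallel extension preserves links for β-rules: under the same hypotheses, if T₁ extends T₀ at open leaf b by a β-rule splitting b into b.0 and b.1, then applying the corresponding two-premise GS3 β-rule at every open leaf s of π₀ with μ₀(s) = b, and mapping the two new children of s to b.0 and b.1 respectively, yields a proof-tree linked to (T₁, σ). -/

import Mathlib

/-!
Every open leaf `p` of `π₀` linked to `b` contains the `σ`-instance of the tableau sequent `Δ`,
hence the `σ`-instance of the principal formula, so the instantiated rule applies at `p`; its
`i`-th premise contains the `σ`-instance of the `i`-th premise of `r` at `Δ`, so `p.i` can be
linked to `b.i`. The other open leaves keep their targets: none of these lies below `b`, since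
two open leaves of a tree in prefix relation coincide.
-/

/-- First-order terms: de Bruijn bound variables, free (meta)variables, function applications. -/
inductive Tm : Type
  | var : ℕ → Tm
  | mvar : ℕ → Tm
  | fn : ℕ → List Tm → Tm

/-- First-order formulas (de Bruijn representation for quantifiers). -/
inductive Fm : Type
  | atom : ℕ → List Tm → Fm
  | neg : Fm → Fm
  | and : Fm → Fm → Fm
  | or : Fm → Fm → Fm
  | imp : Fm → Fm → Fm
  | all : Fm → Fm
  | ex : Fm → Fm

mutual
/-- Apply a substitution of metavariables to a term. -/
def substTm (σ : ℕ → Tm) : Tm → Tm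
  | .var n => .var n
  | .mvar X => σ X
  | .fn f ts => .fn f (substTms σ ts)
def substTms (σ : ℕ → Tm) : List Tm → List Tm
  | [] => []
  | t :: ts => substTm σ t :: substTms σ ts
end

mutual
/-- Replace bound variable `k` by the term `u` (assumed closed), shifting down. -/
def instTm (u : Tm) (k : ℕ) : Tm → Tm
  | .var n => if n = k then u else if k < n then .var (n - 1) else .var n
  | .mvar X => .mvar X
  | .fn f ts => .fn f (instTms u k ts)
def instTms (u : Tm) (k : ℕ) : List Tm → List Tm
  | [] => []
  | t :: ts => instTm u k t :: instTms u k ts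
end

mutual
/-- Metavariables occurring in a term. -/
def mvarsTm : Tm → List ℕ
  | .var _ => []
  | .mvar X => [X]
  | .fn _ ts => mvarsTms ts
def mvarsTms : List Tm → List ℕ
  | [] => []
  | t :: ts => mvarsTm t ++ mvarsTms ts
end

def Fm.substF (σ : ℕ → Tm) : Fm → Fm
  | .atom P ts => .atom P (substTms σ ts)
  | .neg A => .neg (A.substF σ)
  | .and A B => .and (A.substF σ) (B.substF σ)
  | .or A B => .or (A.substF σ) (B.substF σ)
  | .imp A B => .imp (A.substF σ) (B.substF σ)
  | .all A => .all (A.substF σ)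
  | .ex A => .ex (A.substF σ)

def Fm.instF (u : Tm) (k : ℕ) : Fm → Fm
  | .atom P ts => .atom P (instTms u k ts)
  | .neg A => .neg (A.instF u k)
  | .and A B => .and (A.instF u k) (B.instF u k)
  | .or A B => .or (A.instF u k) (B.instF u k)
  | .imp A B => .imp (A.instF u k) (B.instF u k)
  | .all A => .all (A.instF u (k + 1))
  | .ex A => .ex (A.instF u (k + 1))

/-- Instantiate the outermost bound variable of a quantified formula body. -/
def Fm.inst1 (u : Tm) (A : Fm) : Fm := A.instF u 0

def Fm.mvarsF : Fm → List ℕ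
  | .atom _ ts => mvarsTms ts
  | .neg A => A.mvarsF
  | .and A B => A.mvarsF ++ B.mvarsF
  | .or A B => A.mvarsF ++ B.mvarsF
  | .imp A B => A.mvarsF ++ B.mvarsF
  | .all A => A.mvarsF
  | .ex A => A.mvarsF

/-- Occurrence of a subterm satisfying `P` inside a term. -/
inductive OccT (P : Tm → Prop) : Tm → Prop
  | here {t} : P t → OccT P t
  | arg {f ts t} : t ∈ ts → OccT P t → OccT P (.fn f ts)

/-- Occurrence of a subterm satisfying `P` inside a formula. -/
inductive OccF (P : Tm → Prop) : Fm → Prop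
  | atom {n ts t} : t ∈ ts → OccT P t → OccF P (.atom n ts)
  | neg {A} : OccF P A → OccF P (.neg A)
  | andL {A B} : OccF P A → OccF P (.and A B)
  | andR {A B} : OccF P B → OccF P (.and A B)
  | orL {A B} : OccF P A → OccF P (.or A B)
  | orR {A B} : OccF P B → OccF P (.or A B)
  | impL {A B} : OccF P A → OccF P (.imp A B)
  | impR {A B} : OccF P B → OccF P (.imp A B)
  | all {A} : OccF P A → OccF P (.all A)
  | ex {A} : OccF P A → OccF P (.ex A)

/-- The function/constant symbol `c` occurs in the term. -/
def SymInTm (c : ℕ) : Tm → Prop := OccT (fun u => ∃ ts, u = .fn c ts)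
/-- The function/constant symbol `c` occurs in the formula. -/
def SymInFm (c : ℕ) : Fm → Prop := OccF (fun u => ∃ ts, u = .fn c ts)
/-- The metavariable `X` occurs in the formula. -/
def MvarInFm (X : ℕ) : Fm → Prop := OccF (fun u => u = .mvar X)
/-- The term `u` occurs as a subterm in the formula. -/
def TmInFm (u : Tm) : Fm → Prop := OccF (fun v => v = u)

/-- GS3: one-sided, cut-free sequent calculus with implicit contraction and
explicit weakening; `GS3 Δ` means the sequent `Δ ⊢` is derivable. -/
inductive GS3 : Multiset Fm → Prop
  | ax {Δ A} : A ∈ Δ → Fm.neg A ∈ Δ → GS3 Δ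
  | weak {Δ A} : GS3 Δ → GS3 (A ::ₘ Δ)
  | andE {Δ A B} : Fm.and A B ∈ Δ → GS3 (A ::ₘ B ::ₘ Δ) → GS3 Δ
  | negOrE {Δ A B} : Fm.neg (Fm.or A B) ∈ Δ → GS3 (Fm.neg A ::ₘ Fm.neg B ::ₘ Δ) → GS3 Δ
  | negImpE {Δ A B} : Fm.neg (Fm.imp A B) ∈ Δ → GS3 (A ::ₘ Fm.neg B ::ₘ Δ) → GS3 Δ
  | negNegE {Δ A} : Fm.neg (Fm.neg A) ∈ Δ → GS3 (A ::ₘ Δ) → GS3 Δ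
  | orE {Δ A B} : Fm.or A B ∈ Δ → GS3 (A ::ₘ Δ) → GS3 (B ::ₘ Δ) → GS3 Δ
  | impE {Δ A B} : Fm.imp A B ∈ Δ → GS3 (Fm.neg A ::ₘ Δ) → GS3 (B ::ₘ Δ) → GS3 Δ
  | negAndE {Δ A B} : Fm.neg (Fm.and A B) ∈ Δ → GS3 (Fm.neg A ::ₘ Δ) → GS3 (Fm.neg B ::ₘ Δ) → GS3 Δ
  | allE {Δ A} (t : Tm) : Fm.all A ∈ Δ → GS3 (Fm.inst1 t A ::ₘ Δ) → GS3 Δ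
  | negExE {Δ A} (t : Tm) : Fm.neg (Fm.ex A) ∈ Δ → GS3 (Fm.neg (Fm.inst1 t A) ::ₘ Δ) → GS3 Δ
  | exE {Δ A} (c : ℕ) : Fm.ex A ∈ Δ → (∀ B ∈ Δ, ¬ SymInFm c B) →
      GS3 (Fm.inst1 (Tm.fn c []) A ::ₘ Δ) → GS3 Δ
  | negAllE {Δ A} (c : ℕ) : Fm.neg (Fm.all A) ∈ Δ → (∀ B ∈ Δ, ¬ SymInFm c B) →
      GS3 (Fm.neg (Fm.inst1 (Tm.fn c []) A) ::ₘ Δ) → GS3 Δ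
/-- A rule application label (shared between tableaux and GS3 proof-trees). -/
inductive RuleApp : Type
  | andR (A B : Fm) | negOrR (A B : Fm) | negImpR (A B : Fm) | negNegR (A : Fm)
  | orR (A B : Fm) | impR (A B : Fm) | negAndR (A B : Fm)
  | allR (A : Fm) (t : Tm) | negExR (A : Fm) (t : Tm)
  | exR (A : Fm) (t : Tm) | negAllR (A : Fm) (t : Tm)
  | closureR (A B : Fm)
  | weakR (Δ' : Multiset Fm)

/-- The premises (children multisets) generated by a rule applied to `Δ`
(rules are non-destructive: the principal formula is kept). -/
def RuleApp.kids (Δ : Multiset Fm) : RuleApp → List (Multiset Fm)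
  | .andR A B => [A ::ₘ B ::ₘ Δ]
  | .negOrR A B => [Fm.neg A ::ₘ Fm.neg B ::ₘ Δ]
  | .negImpR A B => [A ::ₘ Fm.neg B ::ₘ Δ]
  | .negNegR A => [A ::ₘ Δ]
  | .orR A B => [A ::ₘ Δ, B ::ₘ Δ]
  | .impR A B => [Fm.neg A ::ₘ Δ, B ::ₘ Δ]
  | .negAndR A B => [Fm.neg A ::ₘ Δ, Fm.neg B ::ₘ Δ]
  | .allR A t => [Fm.inst1 t A ::ₘ Δ]
  | .negExR A t => [Fm.neg (Fm.inst1 t A) ::ₘ Δ]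
  | .exR A t => [Fm.inst1 t A ::ₘ Δ]
  | .negAllR A t => [Fm.neg (Fm.inst1 t A) ::ₘ Δ]
  | .closureR _ _ => []
  | .weakR Δ' => [Δ']

def RuleApp.isClosure : RuleApp → Prop
  | .closureR _ _ => True
  | _ => False

def RuleApp.isAlpha : RuleApp → Prop
  | .andR _ _ | .negOrR _ _ | .negImpR _ _ | .negNegR _ => True
  | _ => False

def RuleApp.isBeta : RuleApp → Prop
  | .orR _ _ | .impR _ _ | .negAndR _ _ => True
  | _ => False

def RuleApp.isDelta : RuleApp → Prop
  | .exR _ _ | .negAllR _ _ => True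
  | _ => False

/-- Instantiation of a rule application by a substitution of metavariables. -/
def RuleApp.substR (σ : ℕ → Tm) : RuleApp → RuleApp
  | .andR A B => .andR (A.substF σ) (B.substF σ)
  | .negOrR A B => .negOrR (A.substF σ) (B.substF σ)
  | .negImpR A B => .negImpR (A.substF σ) (B.substF σ)
  | .negNegR A => .negNegR (A.substF σ)
  | .orR A B => .orR (A.substF σ) (B.substF σ)
  | .impR A B => .impR (A.substF σ) (B.substF σ)
  | .negAndR A B => .negAndR (A.substF σ) (B.substF σ)
  | .allR A t => .allR (A.substF σ) (substTm σ t)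
  | .negExR A t => .negExR (A.substF σ) (substTm σ t)
  | .exR A t => .exR (A.substF σ) (substTm σ t)
  | .negAllR A t => .negAllR (A.substF σ) (substTm σ t)
  | .closureR A B => .closureR (A.substF σ) (B.substF σ)
  | .weakR Δ' => .weakR (Δ'.map (Fm.substF σ))

/-- Trees of multisets of formulas: `leaf` is an *open* leaf; internal nodes are
labelled with the rule applied there (a `closureR` node with no children is a closed leaf). -/
inductive FTree : Type
  | leaf : Multiset Fm → FTree
  | node : Multiset Fm → RuleApp → List FTree → FTree

def FTree.root : FTree → Multiset Fm
  | .leaf Δ => Δ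
  | .node Δ _ _ => Δ

/-- The subtree at a path (children indexed by position). -/
def FTree.subAt (t : FTree) : List ℕ → Option FTree
  | [] => some t
  | i :: p =>
    match t with
    | .leaf _ => none
    | .node _ _ ts =>
      match ts[i]? with
      | some t' => t'.subAt p
      | none => none

/-- The multiset at an open leaf located at the given path, if any. -/
def FTree.openLeafAt (t : FTree) (p : List ℕ) : Option (Multiset Fm) :=
  match t.subAt p with
  | some (.leaf Δ) => some Δ
  | _ => none

/-- The rule applied at the node located at the given path, if any. -/
def FTree.ruleAt (t : FTree) (p : List ℕ) : Option RuleApp :=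
  match t.subAt p with
  | some (.node _ r _) => some r
  | _ => none

/-- A tree is closed when it has no open leaves. -/
def FTree.closedT (t : FTree) : Prop := ∀ p Δ, t.subAt p ≠ some (.leaf Δ)

/-- Extend a tree by applying rule `r` at the open leaf located at path `p`. -/
def FTree.extend (r : RuleApp) : List ℕ → FTree → FTree
  | [], .leaf Δ => .node Δ r ((r.kids Δ).map .leaf)
  | [], t => t
  | _ :: _, .leaf Δ => .leaf Δ
  | i :: p, .node Δ r' ts => .node Δ r' (ts.modify i (FTree.extend r p))
  termination_by p _ => p.length

/-- Well-formed trees w.r.t. a side-condition `Ok` on rule applications: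
children carry exactly the premises generated by the rule. -/
inductive WFT (Ok : Multiset Fm → RuleApp → Prop) : FTree → Prop
  | leaf {Δ} : WFT Ok (.leaf Δ)
  | node {Δ r ts} : Ok Δ r → ts.map FTree.root = r.kids Δ →
      (∀ t ∈ ts, WFT Ok t) → WFT Ok (.node Δ r ts)

/-- Side conditions of GS3: principal formula present, genuinely fresh
constants in δ-rules, arbitrary terms in γ-rules, axiom on `A, ¬A`. -/
def okGS3 : Multiset Fm → RuleApp → Prop
  | Δ, .andR A B => Fm.and A B ∈ Δ
  | Δ, .negOrR A B => Fm.neg (Fm.or A B) ∈ Δ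
  | Δ, .negImpR A B => Fm.neg (Fm.imp A B) ∈ Δ
  | Δ, .negNegR A => Fm.neg (Fm.neg A) ∈ Δ
  | Δ, .orR A B => Fm.or A B ∈ Δ
  | Δ, .impR A B => Fm.imp A B ∈ Δ
  | Δ, .negAndR A B => Fm.neg (Fm.and A B) ∈ Δ
  | Δ, .allR A _ => Fm.all A ∈ Δ
  | Δ, .negExR A _ => Fm.neg (Fm.ex A) ∈ Δ
  | Δ, .exR A t => Fm.ex A ∈ Δ ∧ ∃ c, t = Tm.fn c [] ∧ ∀ B ∈ Δ, ¬ SymInFm c B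
  | Δ, .negAllR A t => Fm.neg (Fm.all A) ∈ Δ ∧ ∃ c, t = Tm.fn c [] ∧ ∀ B ∈ Δ, ¬ SymInFm c B
  | Δ, .closureR A B => A ∈ Δ ∧ B ∈ Δ ∧ B = Fm.neg A
  | Δ, .weakR Δ' => Δ' ⊆ Δ

/-- Side conditions of free-variable tableaux with on-the-fly inner
Skolemization, relative to the global unifier `σ`: γ-rules use fresh
metavariables, δ-rules use a fresh Skolem symbol applied to the metavariables
of the Skolemized formula, closure needs the two formulas to be σ-opposite. -/
def okTabFV (σ : ℕ → Tm) : Multiset Fm → RuleApp → Prop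
  | Δ, .andR A B => Fm.and A B ∈ Δ
  | Δ, .negOrR A B => Fm.neg (Fm.or A B) ∈ Δ
  | Δ, .negImpR A B => Fm.neg (Fm.imp A B) ∈ Δ
  | Δ, .negNegR A => Fm.neg (Fm.neg A) ∈ Δ
  | Δ, .orR A B => Fm.or A B ∈ Δ
  | Δ, .impR A B => Fm.imp A B ∈ Δ
  | Δ, .negAndR A B => Fm.neg (Fm.and A B) ∈ Δ
  | Δ, .allR A t => Fm.all A ∈ Δ ∧ ∃ X, t = Tm.mvar X ∧ ∀ B ∈ Δ, ¬ MvarInFm X B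
  | Δ, .negExR A t => Fm.neg (Fm.ex A) ∈ Δ ∧ ∃ X, t = Tm.mvar X ∧ ∀ B ∈ Δ, ¬ MvarInFm X B
  | Δ, .exR A t => Fm.ex A ∈ Δ ∧
      ∃ f, t = Tm.fn f (((Fm.ex A).mvarsF.dedup).map Tm.mvar) ∧ ∀ B ∈ Δ, ¬ SymInFm f B
  | Δ, .negAllR A t => Fm.neg (Fm.all A) ∈ Δ ∧
      ∃ f, t = Tm.fn f (((Fm.neg (Fm.all A)).mvarsF.dedup).map Tm.mvar) ∧ ∀ B ∈ Δ, ¬ SymInFm f B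
  | Δ, .closureR A B => A ∈ Δ ∧ B ∈ Δ ∧ Fm.substF σ B = Fm.neg (Fm.substF σ A)
  | _, .weakR _ => False

/-- Initial part of a tree (same root and rules up to some open leaves;
a closed leaf of `T` may not be replaced by an open leaf). -/
inductive Initial : FTree → FTree → Prop
  | leafLeaf {Δ} : Initial (.leaf Δ) (.leaf Δ)
  | openLeaf {Δ r ts} : ¬ r.isClosure → Initial (.leaf Δ) (.node Δ r ts)
  | node {Δ r ts₀ ts} : ts₀.length = ts.length →
      (∀ (i : ℕ) t₀ t, ts₀[i]? = some t₀ → ts[i]? = some t → Initial t₀ t) →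
      Initial (.node Δ r ts₀) (.node Δ r ts)

/-- A (total) link from an open GS3 proof-tree `π` to a tableau `T` with
unifier `σ`: each open leaf of `π` is mapped to an open leaf of `T` whose
σ-instantiated formulas all appear in the sequent of the leaf of `π`. -/
structure Link (σ : ℕ → Tm) (π T : FTree) where
  μ : List ℕ → List ℕ
  maps : ∀ p Γs, π.openLeafAt p = some Γs →
    ∃ Δ, T.openLeafAt (μ p) = some Δ ∧ ∀ A ∈ Δ, Fm.substF σ A ∈ Γs

/-- A partial link between two GS3 proof-trees. -/
structure PLink (π θ : FTree) where
  μ : List ℕ → Option (List ℕ)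
  maps : ∀ p Γs q, π.openLeafAt p = some Γs → μ p = some q →
    ∃ Δ, θ.openLeafAt q = some Δ ∧ ∀ A ∈ Δ, A ∈ Γs

/-- A bilink: two partial links with disjoint domains covering all open leaves. -/
structure Bilink (π θ₀ θ₁ : FTree) where
  l0 : PLink π θ₀
  l1 : PLink π θ₁
  disj : ∀ p, (l0.μ p).isSome → (l1.μ p).isSome → False
  cover : ∀ p Γs, π.openLeafAt p = some Γs → (l0.μ p).isSome ∨ (l1.μ p).isSome

/-- A formula appearing somewhere in a tree. -/
inductive InTree (A : Fm) : FTree → Prop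
  | leaf {Δ} : A ∈ Δ → InTree A (.leaf Δ)
  | here {Δ r ts} : A ∈ Δ → InTree A (.node Δ r ts)
  | child {Δ r ts t} : t ∈ ts → InTree A t → InTree A (.node Δ r ts)

mutual
/-- Number of rule applications in a tree. -/
def FTree.ruleCount : FTree → ℕ
  | .leaf _ => 0
  | .node _ _ ts => 1 + ruleCountL ts
def ruleCountL : List FTree → ℕ
  | [] => 0
  | t :: ts => t.ruleCount + ruleCountL ts
end

mutual
/-- Instantiate all formulas of a tree by a substitution (the naive translation). -/
def FTree.substT (σ : ℕ → Tm) : FTree → FTree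
  | .leaf Δ => .leaf (Δ.map (Fm.substF σ))
  | .node Δ r ts => .node (Δ.map (Fm.substF σ)) (r.substR σ) (substTL σ ts)
def substTL (σ : ℕ → Tm) : List FTree → List FTree
  | [] => []
  | t :: ts => t.substT σ :: substTL σ ts
end

namespace FTree

theorem subAt_append (t : FTree) (p q : List ℕ) :
    t.subAt (p ++ q) = (t.subAt p).bind (·.subAt q) := by
  induction p generalizing t with
  | nil => rfl
  | cons j p ih =>
    cases t with
    | leaf => rfl
    | node Δ r ts =>
      simp only [List.cons_append, subAt]
      cases ts[j]? <;> simp [ih]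

theorem openLeafAt_eq_some_iff {t : FTree} {p : List ℕ} {Γ : Multiset Fm} :
    t.openLeafAt p = some Γ ↔ t.subAt p = some (leaf Γ) := by
  unfold openLeafAt
  rcases t.subAt p with _ | _ | _ <;> simp

theorem openLeafAt_node_cons (Δ : Multiset Fm) (r : RuleApp) (ts : List FTree) (k : ℕ)
    (q : List ℕ) : (node Δ r ts).openLeafAt (k :: q) = ts[k]?.bind (·.openLeafAt q) := by
  unfold openLeafAt
  simp only [subAt]
  cases ts[k]? <;> rfl

theorem eq_of_prefix_of_openLeafAt {t : FTree} {p q : List ℕ} {Γ Γ' : Multiset Fm}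
    (hp : t.openLeafAt p = some Γ) (hq : t.openLeafAt q = some Γ') (hpq : p <+: q) : p = q := by
  obtain ⟨_ | ⟨j, s⟩, rfl⟩ := hpq
  · simp
  · rw [openLeafAt_eq_some_iff, subAt_append, openLeafAt_eq_some_iff.mp hp] at hq
    simp [subAt] at hq

theorem not_prefix_concat_of_openLeafAt {t : FTree} {p q : List ℕ} {Γ Γ' : Multiset Fm}
    (hp : t.openLeafAt p = some Γ) (hq : t.openLeafAt q = some Γ') (hne : p ≠ q) (i : ℕ) :
    ¬ p <+: q ++ [i] := by
  rw [List.prefix_concat_iff]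
  rintro (rfl | hpq)
  · simpa using eq_of_prefix_of_openLeafAt hq hp (List.prefix_append _ _)
  · exact hne (eq_of_prefix_of_openLeafAt hp hq hpq)

theorem extend_nil_leaf (r : RuleApp) (Δ : Multiset Fm) :
    (leaf Δ).extend r [] = node Δ r ((r.kids Δ).map leaf) := by
  simp [extend]

theorem extend_cons_node (r : RuleApp) (i : ℕ) (p : List ℕ) (Δ : Multiset Fm) (r' : RuleApp)
    (ts : List FTree) : (node Δ r' ts).extend r (i :: p) = node Δ r' (ts.modify i (extend r p)) := by
  simp [extend]

theorem root_extend (r : RuleApp) (b : List ℕ) (t : FTree) : (t.extend r b).root = t.root := by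
  cases b <;> cases t <;> simp [extend, root]

theorem openLeafAt_extend_of_not_prefix (r : RuleApp) {b q : List ℕ} (t : FTree) (h : ¬ b <+: q) :
    (t.extend r b).openLeafAt q = t.openLeafAt q := by
  induction b generalizing t q with
  | nil => exact absurd List.nil_prefix h
  | cons j b ih =>
    cases t with
    | leaf Δ => simp [extend]
    | node Δ r' ts =>
      rw [extend_cons_node]
      cases q with
      | nil => rfl
      | cons k q =>
        rw [openLeafAt_node_cons, openLeafAt_node_cons, List.getElem?_modify]
        by_cases hjk : j = k
        · subst hjk
          cases ts[j]? <;> simp [ih _ (fun hc => h (List.cons_prefix_cons.mpr ⟨rfl, hc⟩))]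
        · simp [hjk]

theorem subAt_extend_self (r : RuleApp) {b : List ℕ} {t : FTree} {Δ : Multiset Fm}
    (h : t.subAt b = some (leaf Δ)) :
    (t.extend r b).subAt b = some (node Δ r ((r.kids Δ).map leaf)) := by
  induction b generalizing t with
  | nil =>
    obtain rfl : t = leaf Δ := by simpa [subAt] using h
    simp [extend_nil_leaf, subAt]
  | cons j b ih =>
    cases t with
    | leaf => simp [subAt] at h
    | node Δ' r' ts =>
      rw [extend_cons_node]
      simp only [subAt, List.getElem?_modify] at h ⊢
      cases hj : ts[j]? with
      | none => simp [hj] at h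
      | some tj => simpa [hj] using ih (by simpa [hj] using h)

theorem openLeafAt_node_leaves_iff {Δ : Multiset Fm} {r : RuleApp} {Ks : List (Multiset Fm)}
    {s : List ℕ} {Γ : Multiset Fm} :
    (node Δ r (Ks.map leaf)).openLeafAt s = some Γ ↔ ∃ i, s = [i] ∧ Ks[i]? = some Γ := by
  rcases s with _ | ⟨i, _ | ⟨j, s⟩⟩
  · simp [openLeafAt, subAt]
  · rw [openLeafAt_node_cons]
    cases h : Ks[i]? <;> simp [h, openLeafAt, subAt]
  · rw [openLeafAt_node_cons, List.getElem?_map]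
    cases Ks[i]? <;> simp [openLeafAt, subAt]

theorem openLeafAt_extend_iff (r : RuleApp) {t : FTree} {b : List ℕ} {Δ : Multiset Fm}
    (hb : t.openLeafAt b = some Δ) {q : List ℕ} {Γ : Multiset Fm} :
    (t.extend r b).openLeafAt q = some Γ ↔
      (¬ b <+: q ∧ t.openLeafAt q = some Γ) ∨ ∃ i, q = b ++ [i] ∧ (r.kids Δ)[i]? = some Γ := by
  by_cases hbq : b <+: q
  · obtain ⟨s, rfl⟩ := hbq
    rw [openLeafAt_eq_some_iff, subAt_append, subAt_extend_self r (openLeafAt_eq_some_iff.mp hb),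
      Option.bind_some, ← openLeafAt_eq_some_iff, openLeafAt_node_leaves_iff]
    simp
  · rw [openLeafAt_extend_of_not_prefix r t hbq]
    simp only [hbq, not_false_eq_true, true_and, iff_self_or]
    rintro ⟨i, rfl, -⟩
    exact (hbq (List.prefix_append _ _)).elim

end FTree

open FTree in
theorem WFT.extend {Ok : Multiset Fm → RuleApp → Prop} {r : RuleApp} {b : List ℕ} {t : FTree}
    {Δ : Multiset Fm} (ht : WFT Ok t) (hb : t.openLeafAt b = some Δ) (hr : Ok Δ r) :
    WFT Ok (t.extend r b) := by
  induction b generalizing t with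
  | nil =>
    obtain rfl : t = FTree.leaf Δ := by simpa [openLeafAt_eq_some_iff, subAt] using hb
    rw [extend_nil_leaf]
    exact .node hr (by simp [Function.comp_def, root]) (by simp [WFT.leaf])
  | cons j b ih =>
    cases ht with
    | leaf => simp [openLeafAt, subAt] at hb
    | @node _ _ ts hok hroots hkids =>
      rw [openLeafAt_node_cons] at hb
      rw [extend_cons_node]
      refine .node hok ?_ ?_
      · rw [← hroots]
        refine List.ext_getElem? fun n => ?_
        simp only [List.getElem?_map, List.getElem?_modify]
        split_ifs <;> simp [Function.comp_def, root_extend]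
      · intro t' ht'
        obtain ⟨n, hn⟩ := List.mem_iff_getElem?.mp ht'
        rw [List.getElem?_modify] at hn
        cases htn : ts[n]? with
        | none => simp [htn] at hn
        | some tn =>
          have hkid := hkids tn (List.mem_of_getElem? htn)
          split_ifs at hn with hjn <;> simp only [htn, Option.map_eq_map, Option.map_some,
            Option.some_inj] at hn <;> subst hn
          · subst hjn
            exact ih hkid (by simpa [htn] using hb)
          · exact hkid

namespace FTree

theorem openLeafAt_foldr_extend_iff (r : RuleApp) {π : FTree} {ps : List (List ℕ)}
    (hnd : ps.Nodup) (hps : ∀ p ∈ ps, ∃ Γ, π.openLeafAt p = some Γ) {q : List ℕ}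
    {Γ : Multiset Fm} :
    (ps.foldr (extend r) π).openLeafAt q = some Γ ↔
      (π.openLeafAt q = some Γ ∧ q ∉ ps) ∨
      ∃ p ∈ ps, ∃ Γp, π.openLeafAt p = some Γp ∧ ∃ i, q = p ++ [i] ∧ (r.kids Γp)[i]? = some Γ := by
  induction ps generalizing q Γ with
  | nil => simp
  | cons p₀ ps ih =>
    obtain ⟨hp₀, hnd⟩ := List.nodup_cons.mp hnd
    obtain ⟨Γ₀, hΓ₀⟩ := hps p₀ List.mem_cons_self
    have ih := @ih hnd fun p hp => hps p (List.mem_cons_of_mem _ hp)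
    rw [List.foldr_cons, openLeafAt_extend_iff r (ih.mpr (.inl ⟨hΓ₀, hp₀⟩)), ih]
    constructor
    · rintro (⟨hpre, ⟨hq, hqps⟩ | ⟨p, hp, Γp, hΓp, i, rfl, hi⟩⟩ | ⟨i, rfl, hi⟩)
      · refine .inl ⟨hq, ?_⟩
        rw [List.mem_cons, not_or]
        exact ⟨fun h => hpre (h ▸ List.prefix_refl _), hqps⟩
      · exact .inr ⟨p, List.mem_cons_of_mem _ hp, Γp, hΓp, i, rfl, hi⟩
      · exact .inr ⟨p₀, List.mem_cons_self, Γ₀, hΓ₀, i, rfl, hi⟩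
    · rintro (⟨hq, hqps⟩ | ⟨p, hp, Γp, hΓp, i, rfl, hi⟩)
      · rw [List.mem_cons, not_or] at hqps
        exact .inl ⟨fun hpre => hqps.1 (eq_of_prefix_of_openLeafAt hΓ₀ hq hpre).symm,
          .inl ⟨hq, hqps.2⟩⟩
      · rcases List.mem_cons.mp hp with rfl | hp
        · cases hΓ₀.symm.trans hΓp
          exact .inr ⟨i, rfl, hi⟩
        · exact .inl ⟨not_prefix_concat_of_openLeafAt hΓ₀ hΓp (fun h => hp₀ (h ▸ hp)) i,
            .inr ⟨p, hp, Γp, hΓp, i, rfl, hi⟩⟩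

end FTree

theorem WFT.foldr_extend {Ok : Multiset Fm → RuleApp → Prop} {r : RuleApp} {π : FTree}
    {ps : List (List ℕ)} (hπ : WFT Ok π) (hnd : ps.Nodup)
    (hps : ∀ p ∈ ps, ∃ Γ, π.openLeafAt p = some Γ ∧ Ok Γ r) :
    WFT Ok (ps.foldr (FTree.extend r) π) := by
  induction ps with
  | nil => exact hπ
  | cons p₀ ps ih =>
    obtain ⟨hp₀, hnd'⟩ := List.nodup_cons.mp hnd
    obtain ⟨Γ₀, hΓ₀, hok⟩ := hps p₀ List.mem_cons_self
    have hleaf : (ps.foldr (FTree.extend r) π).openLeafAt p₀ = some Γ₀ :=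
      (FTree.openLeafAt_foldr_extend_iff r hnd'
        (fun p hp => (hps p (List.mem_cons_of_mem _ hp)).imp fun _ => And.left)).mpr
        (.inl ⟨hΓ₀, hp₀⟩)
    exact (ih hnd' fun p hp => hps p (List.mem_cons_of_mem _ hp)).extend hleaf hok

namespace RuleApp

variable {σ : ℕ → Tm} {r : RuleApp} {Δ Γ : Multiset Fm}

theorem okGS3_substR (hr : r.isAlpha ∨ r.isBeta) (hok : okTabFV σ Δ r)
    (hΓ : ∀ A ∈ Δ, A.substF σ ∈ Γ) : okGS3 Γ (r.substR σ) := by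
  cases r <;> simp only [isAlpha, isBeta, or_self] at hr <;> exact hΓ _ hok

theorem exists_kids_substR (hr : r.isAlpha ∨ r.isBeta) (hΓ : ∀ A ∈ Δ, A.substF σ ∈ Γ)
    {i : ℕ} {K' : Multiset Fm} (hK' : ((r.substR σ).kids Γ)[i]? = some K') :
    ∃ K, (r.kids Δ)[i]? = some K ∧ ∀ A ∈ K, A.substF σ ∈ K' := by
  cases r <;> simp only [isAlpha, isBeta, or_self] at hr <;>
    rcases i with _ | _ | i <;> simp [kids, substR] at hK' ⊢ <;> subst hK' <;>
    simp only [Fm.substF, Multiset.mem_cons, true_or, or_true,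
      true_and] <;> exact fun A hA => by simp [hΓ A hA]

end RuleApp

namespace Link

open FTree

variable {σ : ℕ → Tm} {π T : FTree} (L : Link σ π T)

theorem substF_mem_of_μ_eq {p b : List ℕ} {Γ Δ : Multiset Fm} (hp : π.openLeafAt p = some Γ)
    (hμ : L.μ p = b) (hb : T.openLeafAt b = some Δ) : ∀ A ∈ Δ, A.substF σ ∈ Γ := by
  obtain ⟨Δ', hΔ', hsub⟩ := L.maps p Γ hp
  rw [hμ, hb, Option.some_inj] at hΔ'
  exact hΔ' ▸ hsub

theorem exists_foldr_extend {b : List ℕ} {Δ : Multiset Fm} {r : RuleApp}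
    (hb : T.openLeafAt b = some Δ) (hr : r.isAlpha ∨ r.isBeta) {ps : List (List ℕ)}
    (hnd : ps.Nodup) (hps : ∀ p, p ∈ ps ↔ (∃ Γ, π.openLeafAt p = some Γ) ∧ L.μ p = b) :
    ∃ L₁ : Link σ (ps.foldr (extend (r.substR σ)) π) (T.extend r b),
      (∀ p ∈ ps, ∀ i, L₁.μ (p ++ [i]) = b ++ [i]) ∧
      (∀ p Γ, π.openLeafAt p = some Γ → p ∉ ps → L₁.μ p = L.μ p) := by
  have hleaf (p) (hp : p ∈ ps) : ∃ Γ, π.openLeafAt p = some Γ := ((hps p).mp hp).1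
  let μ₁ (q : List ℕ) : List ℕ := if q.dropLast ∈ ps then b ++ [q.getLast?.getD 0] else L.μ q
  have hμ_new (p) (hp : p ∈ ps) (i : ℕ) : μ₁ (p ++ [i]) = b ++ [i] := by simp [μ₁, hp]
  have hμ_old (q Γ) (hq : π.openLeafAt q = some Γ) (hqps : q ∉ ps) : μ₁ q = L.μ q := by
    refine if_neg fun hmem => hqps ?_
    obtain ⟨Γ', hΓ'⟩ := hleaf _ hmem
    rwa [← eq_of_prefix_of_openLeafAt hΓ' hq (List.dropLast_prefix q)]
  refine ⟨⟨μ₁, fun q Γ hq => ?_⟩, hμ_new, hμ_old⟩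
  rcases (openLeafAt_foldr_extend_iff _ hnd hleaf).mp hq with
    ⟨hq, hqps⟩ | ⟨p, hp, Γp, hΓp, i, rfl, hi⟩
  · obtain ⟨Δ', hΔ', hsub⟩ := L.maps q Γ hq
    refine ⟨Δ', ?_, hsub⟩
    rw [hμ_old q Γ hq hqps, openLeafAt_extend_iff r hb]
    refine .inl ⟨fun hpre => hqps ((hps q).mpr ⟨⟨Γ, hq⟩, ?_⟩), hΔ'⟩
    exact (eq_of_prefix_of_openLeafAt hb hΔ' hpre).symm
  · obtain ⟨K, hK, hsub⟩ :=
      RuleApp.exists_kids_substR hr (L.substF_mem_of_μ_eq hΓp ((hps p).mp hp).2 hb) hi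
    refine ⟨K, ?_, hsub⟩
    rw [hμ_new p hp i, openLeafAt_extend_iff r hb]
    exact .inr ⟨i, rfl, hK⟩

end Link

/-- Parallel extension preserves links for β-rules: extending `T₀` at open leaf
`b` by a β-rule splitting `b` into `b.0` and `b.1`, and applying the
corresponding two-premise GS3 β-rule at every open leaf of `π₀` mapped to `b`,
yields a well-formed proof-tree linked to the extended tableau, the two new
children of each such leaf being mapped to `b.0` and `b.1` respectively and the
link unchanged elsewhere. -/
theorem parallel_extension_beta (σ : ℕ → Tm) (T T₀ π₀ : FTree) (L : Link σ π₀ T₀)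
    (hT : WFT (okTabFV σ) T) (hTcl : T.closedT) (hini : Initial T₀ T)
    (hπ : WFT okGS3 π₀) (hroot : π₀.root = T₀.root.map (Fm.substF σ))
    (b : List ℕ) (Δ : Multiset Fm) (r : RuleApp)
    (hb : T₀.openLeafAt b = some Δ) (hrule : T.ruleAt b = some r)
    (hbeta : r.isBeta) (hok : okTabFV σ Δ r)
    (ps : List (List ℕ)) (hnd : ps.Nodup)
    (hps : ∀ p, p ∈ ps ↔ (∃ Γs, π₀.openLeafAt p = some Γs) ∧ L.μ p = b) :
    WFT okGS3 (ps.foldr (FTree.extend (r.substR σ)) π₀) ∧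
      ∃ L₁ : Link σ (ps.foldr (FTree.extend (r.substR σ)) π₀) (FTree.extend r b T₀),
        (∀ p ∈ ps, L₁.μ (p ++ [0]) = b ++ [0] ∧ L₁.μ (p ++ [1]) = b ++ [1]) ∧
        (∀ p Γs, π₀.openLeafAt p = some Γs → p ∉ ps → L₁.μ p = L.μ p) := by
  have hr : r.isAlpha ∨ r.isBeta := .inr hbeta
  refine ⟨hπ.foldr_extend hnd fun p hp => ?_, ?_⟩
  · obtain ⟨⟨Γ, hΓ⟩, hμ⟩ := (hps p).mp hp
    exact ⟨Γ, hΓ, RuleApp.okGS3_substR hr hok (L.substF_mem_of_μ_eq hΓ hμ hb)⟩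
  · obtain ⟨L₁, hnew, hold⟩ := L.exists_foldr_extend hb hr hnd hps
    exact ⟨L₁, fun p hp => ⟨hnew p hp 0, hnew p hp 1⟩, hold⟩
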